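/- arXiv:2312.10336 — 5 statements merged into one kernel-verified Lean document; each statement's English description precedes it below -/
import Mathlib

section
/- Let V ⊆ ℝ^{d2} be nonempty, closed and convex, fix ω* ∈ ℝ^{d1}, and suppose that for every z ∈ S the map v ↦ f(ω*, v; z) is L-Lipschitz on V and μ_v-strongly concave on V. Let n > m ≥ 1, let ν* ∈ V be a maximizer of F_S(ω*, ·) over V, and let ν' ∈ V be a maximizer of F_{S∖U}(ω*, ·) over V. Then ‖ν* − ν'‖ ≤ 2Lm/(μ_v(n−m)). -/
/-!
Let `H` be the sum of the losses over `S ∖ U` and `P` the sum over `U`. `H` is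
`(n - m) μv`-strongly concave and maximised at `ν'`, so
`H ν' - H νstar ≥ (n - m) μv / 2 * ‖νstar - ν'‖ ^ 2`. Since `νstar` maximises `H + P`, this gap is
at most `P νstar - P ν' ≤ m L ‖νstar - ν'‖`; dividing by `‖νstar - ν'‖` gives the bound.
-/

open Filter Topology Finset

lemma strongConcaveOn_of_convexOn_neg_sub {F : Type*} [NormedAddCommGroup F]
    [InnerProductSpace ℝ F] {s : Set F} {c : ℝ} {g : F → ℝ}
    (h : ConvexOn ℝ s fun v => -g v - c / 2 * ‖v‖ ^ 2) :
    StrongConcaveOn s c g := by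
  rw [strongConcaveOn_iff_convex, ← neg_convexOn_iff]
  have hneg : (-fun v => g v + c / 2 * ‖v‖ ^ 2) = fun v => -g v - c / 2 * ‖v‖ ^ 2 := by
    ext v
    simp only [Pi.neg_apply, neg_add']
  rwa [hneg]

section

variable {E : Type*} [NormedAddCommGroup E] [NormedSpace ℝ E] {s : Set E} {c : ℝ}

lemma StrongConcaveOn.sum {ι : Type*} {g : ι → E → ℝ} (hs : Convex ℝ s) (T : Finset ι)
    (hg : ∀ i ∈ T, StrongConcaveOn s c (g i)) :
    StrongConcaveOn s (#T * c) (∑ i ∈ T, g i) := by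
  classical
  induction T using Finset.induction_on with
  | empty =>
    rw [sum_empty, card_empty, Nat.cast_zero, zero_mul, strongConcaveOn_zero]
    exact concaveOn_const 0 hs
  | insert j T hj ih =>
    rw [sum_insert hj, card_insert_of_notMem hj]
    have h := (hg j (mem_insert_self j T)).add (ih fun i hi => hg i (mem_insert_of_mem hi))
    rw [StrongConcaveOn]
    convert h using 2 with r
    simp only [Pi.add_apply]
    push_cast
    ring

lemma StrongConcaveOn.mul_sq_norm_sub_le_of_isMaxOn {g : E → ℝ} {x y : E}
    (hg : StrongConcaveOn s c g) (hmax : IsMaxOn g s x) (hx : x ∈ s) (hy : y ∈ s) :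
    c / 2 * ‖x - y‖ ^ 2 ≤ g x - g y := by
  have hsegment : ∀ t ∈ Set.Ioo (0 : ℝ) 1, (1 - t) * (c / 2 * ‖x - y‖ ^ 2) ≤ g x - g y := by
    intro t ⟨ht0, ht1⟩
    have hconc := hg.2 hx hy (sub_nonneg.2 ht1.le) ht0.le (sub_add_cancel 1 t)
    have hle := hmax (hg.1 hx hy (sub_nonneg.2 ht1.le) ht0.le (sub_add_cancel 1 t))
    simp only [smul_eq_mul, Set.mem_ofPred_eq] at hconc hle
    refine le_of_mul_le_mul_left ?_ ht0
    nlinarith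
  have hlim : Tendsto (fun t : ℝ => (1 - t) * (c / 2 * ‖x - y‖ ^ 2)) (𝓝[>] 0)
      (𝓝 (c / 2 * ‖x - y‖ ^ 2)) := by
    refine tendsto_nhdsWithin_of_tendsto_nhds ?_
    have hcont : Continuous fun t : ℝ => (1 - t) * (c / 2 * ‖x - y‖ ^ 2) := by fun_prop
    simpa using hcont.tendsto 0
  exact le_of_tendsto hlim (eventually_of_mem (Ioo_mem_nhdsGT one_pos) hsegment)

lemma StrongConcaveOn.mul_sq_norm_sub_le_of_isMaxOn_add {g p : E → ℝ} {x y : E}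
    (hg : StrongConcaveOn s c g) (hy : IsMaxOn g s y) (hx : IsMaxOn (g + p) s x)
    (hxs : x ∈ s) (hys : y ∈ s) :
    c / 2 * ‖x - y‖ ^ 2 ≤ p x - p y := by
  have hgrowth := hg.mul_sq_norm_sub_le_of_isMaxOn hy hys hxs
  have hsum : g y + p y ≤ g x + p x := hx hys
  rw [norm_sub_rev]
  linarith

lemma le_div_of_half_mul_sq_le_mul {a b r : ℝ} (ha : 0 < a) (hb : 0 ≤ b) (hr : 0 ≤ r)
    (h : a / 2 * r ^ 2 ≤ b * r) : r ≤ 2 * b / a := by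
  rw [le_div_iff₀ ha]
  rcases hr.eq_or_lt with rfl | hr
  · rw [zero_mul]
    positivity
  · nlinarith

end

lemma sum_apply_sub_sum_apply_le {ι E : Type*} [SeminormedAddCommGroup E] {g : ι → E → ℝ}
    {T : Finset ι} {L : ℝ} {x y : E} (hg : ∀ i ∈ T, |g i x - g i y| ≤ L * ‖x - y‖) :
    (∑ i ∈ T, g i) x - (∑ i ∈ T, g i) y ≤ #T * L * ‖x - y‖ := by
  rw [Finset.sum_apply, Finset.sum_apply, ← sum_sub_distrib, mul_assoc, ← nsmul_eq_mul]
  exact sum_le_card_nsmul T _ _ fun i hi => (le_abs_self _).trans (hg i hi)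

theorem statement_0_general {d1 d2 : ℕ} {Z : Type*}
    (n m : ℕ) (hmn : m < n)
    (f : EuclideanSpace ℝ (Fin d1) → EuclideanSpace ℝ (Fin d2) → Z → ℝ)
    (S : Fin n → Z) (U : Finset (Fin n)) (hUcard : U.card = m)
    (V : Set (EuclideanSpace ℝ (Fin d2)))
    (hVcv : Convex ℝ V)
    (ωstar : EuclideanSpace ℝ (Fin d1))
    (L μv : ℝ) (hL : 0 ≤ L) (hμv : 0 < μv)
    (hLip : ∀ i : Fin n, ∀ v ∈ V, ∀ v' ∈ V,
      |f ωstar v (S i) - f ωstar v' (S i)| ≤ L * ‖v - v'‖)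
    (hConc : ∀ i : Fin n,
      ConvexOn ℝ V fun v => -f ωstar v (S i) - μv / 2 * ‖v‖ ^ 2)
    (νstar ν' : EuclideanSpace ℝ (Fin d2))
    (hνstarMem : νstar ∈ V)
    (hνstarMax : ∀ v ∈ V,
      (1 / (n : ℝ)) * ∑ i, f ωstar v (S i) ≤ (1 / (n : ℝ)) * ∑ i, f ωstar νstar (S i))
    (hν'Mem : ν' ∈ V)
    (hν'Max : ∀ v ∈ V,
      (1 / ((n : ℝ) - m)) * ∑ i ∈ Finset.univ \ U, f ωstar v (S i)
        ≤ (1 / ((n : ℝ) - m)) * ∑ i ∈ Finset.univ \ U, f ωstar ν' (S i)) :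
    ‖νstar - ν'‖ ≤ 2 * L * m / (μv * ((n : ℝ) - m)) := by
  set F : Fin n → EuclideanSpace ℝ (Fin d2) → ℝ := fun i v => f ωstar v (S i)
  have hn : (0 : ℝ) < n := Nat.cast_pos.2 (by omega)
  have hnm : (0 : ℝ) < n - m := sub_pos.2 (by exact_mod_cast hmn)
  have hcard : (#(univ \ U) : ℝ) = n - m := by
    rw [card_sdiff_of_subset (subset_univ U), card_univ, Fintype.card_fin, hUcard,
      Nat.cast_sub hmn.le]
  have hconc : StrongConcaveOn V ((n - m) * μv) (∑ i ∈ univ \ U, F i) :=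
    hcard ▸ StrongConcaveOn.sum hVcv _ fun i _ => strongConcaveOn_of_convexOn_neg_sub (hConc i)
  have hν'IsMax : IsMaxOn (∑ i ∈ univ \ U, F i) V ν' := isMaxOn_iff.2 fun v hv => by
    rw [Finset.sum_apply, Finset.sum_apply]
    exact le_of_mul_le_mul_left (hν'Max v hv) (by positivity)
  have hνstarIsMax : IsMaxOn (∑ i ∈ univ \ U, F i + ∑ i ∈ U, F i) V νstar := by
    rw [sum_sdiff (subset_univ U)]
    refine isMaxOn_iff.2 fun v hv => ?_
    rw [Finset.sum_apply, Finset.sum_apply]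
    exact le_of_mul_le_mul_left (hνstarMax v hv) (by positivity)
  have hgap := hconc.mul_sq_norm_sub_le_of_isMaxOn_add hν'IsMax hνstarIsMax hνstarMem hν'Mem
  have hLipU : (∑ i ∈ U, F i) νstar - (∑ i ∈ U, F i) ν' ≤ m * L * ‖νstar - ν'‖ :=
    hUcard ▸ sum_apply_sub_sum_apply_le fun i _ => hLip i νstar hνstarMem ν' hν'Mem
  rw [mul_assoc]
  exact le_div_of_half_mul_sq_le_mul (by positivity) (by positivity) (norm_nonneg _)
    (by linarith)

/-- If the per-sample losses `v ↦ f(ω*, v; zᵢ)` are `L`-Lipschitz and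
`μv`-strongly concave on a nonempty closed convex set `V`, then the maximizer `ν*` of the
full empirical loss `F_S(ω*,·)` and the maximizer `ν'` of the leave-`U`-out loss
`F_{S∖U}(ω*,·)` satisfy `‖ν* − ν'‖ ≤ 2Lm/(μv(n−m))`. -/
theorem statement_0 {d1 d2 : ℕ} {Z : Type*}
    (n m : ℕ) (hm : 1 ≤ m) (hmn : m < n)
    (f : EuclideanSpace ℝ (Fin d1) → EuclideanSpace ℝ (Fin d2) → Z → ℝ)
    (S : Fin n → Z) (U : Finset (Fin n)) (hUcard : U.card = m)
    (V : Set (EuclideanSpace ℝ (Fin d2)))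
    (hVne : V.Nonempty) (hVcl : IsClosed V) (hVcv : Convex ℝ V)
    (ωstar : EuclideanSpace ℝ (Fin d1))
    (L μv : ℝ) (hL : 0 ≤ L) (hμv : 0 < μv)
    (hLip : ∀ i : Fin n, ∀ v ∈ V, ∀ v' ∈ V,
      |f ωstar v (S i) - f ωstar v' (S i)| ≤ L * ‖v - v'‖)
    (hConc : ∀ i : Fin n,
      ConvexOn ℝ V fun v => -f ωstar v (S i) - μv / 2 * ‖v‖ ^ 2)
    (νstar ν' : EuclideanSpace ℝ (Fin d2))
    (hνstarMem : νstar ∈ V)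
    (hνstarMax : ∀ v ∈ V,
      (1 / (n : ℝ)) * ∑ i, f ωstar v (S i) ≤ (1 / (n : ℝ)) * ∑ i, f ωstar νstar (S i))
    (hν'Mem : ν' ∈ V)
    (hν'Max : ∀ v ∈ V,
      (1 / ((n : ℝ) - m)) * ∑ i ∈ Finset.univ \ U, f ωstar v (S i)
        ≤ (1 / ((n : ℝ) - m)) * ∑ i ∈ Finset.univ \ U, f ωstar ν' (S i)) :
    ‖νstar - ν'‖ ≤ 2 * L * m / (μv * ((n : ℝ) - m)) :=
  statement_0_general n m hmn f S U hUcard V hVcv ωstar L μv hL hμv hLip hConc νstar ν' hνstarMem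
    hνstarMax hν'Mem hν'Max
end

section
/- Let V ⊆ ℝ^{d2} be nonempty, closed and convex, and let F : ℝ^{d1} × ℝ^{d2} → ℝ be differentiable with ℓ-Lipschitz gradient (jointly in (ω,v)) such that F(ω,·) is μ_v-strongly concave on V for every ω. For each ω let V*(ω) ∈ V denote the unique maximizer of F(ω,·) over V. Then the best-response map V* is (ℓ/μ_v)-Lipschitz: ‖V*(ω_1) − V*(ω_2)‖ ≤ (ℓ/μ_v)‖ω_1 − ω_2‖ for all ω_1, ω_2 ∈ ℝ^{d1}. -/
open MeasureTheory ProbabilityTheory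
open scoped BigOperators NNReal ENNReal

noncomputable section

abbrev Euc (d : ℕ) : Type := EuclideanSpace ℝ (Fin d)

def gradW {d1 d2 : ℕ} (g : Euc d1 → Euc d2 → ℝ) (ω : Euc d1) (v : Euc d2) : Euc d1 :=
  gradient (fun ω' => g ω' v) ω

def gradV {d1 d2 : ℕ} (g : Euc d1 → Euc d2 → ℝ) (ω : Euc d1) (v : Euc d2) : Euc d2 :=
  gradient (fun v' => g ω v') v

def pWW {d1 d2 : ℕ} (g : Euc d1 → Euc d2 → ℝ) (ω : Euc d1) (v : Euc d2) : Euc d1 →L[ℝ] Euc d1 :=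
  fderiv ℝ (fun ω' => gradW g ω' v) ω

def pWV {d1 d2 : ℕ} (g : Euc d1 → Euc d2 → ℝ) (ω : Euc d1) (v : Euc d2) : Euc d2 →L[ℝ] Euc d1 :=
  fderiv ℝ (fun v' => gradW g ω v') v

def pVW {d1 d2 : ℕ} (g : Euc d1 → Euc d2 → ℝ) (ω : Euc d1) (v : Euc d2) : Euc d1 →L[ℝ] Euc d2 :=
  fderiv ℝ (fun ω' => gradV g ω' v) ω

def pVV {d1 d2 : ℕ} (g : Euc d1 → Euc d2 → ℝ) (ω : Euc d1) (v : Euc d2) : Euc d2 →L[ℝ] Euc d2 :=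
  fderiv ℝ (fun v' => gradV g ω v') v

def Dww {d1 d2 : ℕ} (g : Euc d1 → Euc d2 → ℝ) (ω : Euc d1) (v : Euc d2) : Euc d1 →L[ℝ] Euc d1 :=
  pWW g ω v - (pWV g ω v).comp (((pVV g ω v).inverse).comp (pVW g ω v))

def Dvv {d1 d2 : ℕ} (g : Euc d1 → Euc d2 → ℝ) (ω : Euc d1) (v : Euc d2) : Euc d2 →L[ℝ] Euc d2 :=
  pVV g ω v - (pVW g ω v).comp (((pWW g ω v).inverse).comp (pWV g ω v))

def fz {d1 d2 : ℕ} {Z : Type*} (f : Euc d1 → Euc d2 → Z → ℝ) (z : Z) :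
    Euc d1 → Euc d2 → ℝ :=
  fun ω v => f ω v z

def stdGaussian (d : ℕ) (σ : ℝ) : Measure (Euc d) :=
  (Measure.pi fun _ : Fin d => gaussianReal 0 (Real.toNNReal (σ ^ 2))).map
    ⇑(EuclideanSpace.equiv (Fin d) ℝ).symm

/-! Write `u = V*(ω₁)`, `w = V*(ω₂)` and `∇ = ∇_v`. Fermat's rule on `V` gives
`⟪∇F(ω₁,u), w - u⟫ ≤ 0` and `⟪∇F(ω₂,w), u - w⟫ ≤ 0`, while `μ`-strong concavity of `F(ω₂,·)`
makes its gradient strongly monotone: `μ‖w - u‖² ≤ ⟪∇F(ω₂,u) - ∇F(ω₂,w), w - u⟫`. Adding up,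
`μ‖w - u‖² ≤ ⟪∇F(ω₂,u) - ∇F(ω₁,u), w - u⟫ ≤ ℓ‖ω₂ - ω₁‖‖w - u‖`. -/

section

open Set InnerProductSpace
open scoped RealInnerProductSpace

variable {E : Type*} [NormedAddCommGroup E]

lemma ConcaveOn.sub_le_of_hasFDerivAt [NormedSpace ℝ E] {s : Set E} {f : E → ℝ}
    {f' : StrongDual ℝ E} {u w : E} (hf : ConcaveOn ℝ s f) (hu : u ∈ s) (hw : w ∈ s)
    (hf' : HasFDerivAt f f' u) : f w - f u ≤ f' (w - u) := by
  have hline : ConcaveOn ℝ (Icc (0 : ℝ) 1) (f ∘ (AffineMap.lineMap u w : ℝ →ᵃ[ℝ] E)) :=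
    (hf.comp_affineMap _).subset (fun t ht ↦ hf.1.lineMap_mem hu hw ht) (convex_Icc 0 1)
  have hderiv : HasDerivAt (f ∘ (AffineMap.lineMap u w : ℝ →ᵃ[ℝ] E)) (f' (w - u)) 0 := by
    simpa using hf'.comp_hasDerivAt_of_eq (0 : ℝ) AffineMap.hasDerivAt_lineMap (by simp)
  have hslope := hline.slope_le_of_hasDerivAt (by simp) (by simp) one_pos hderiv
  rwa [slope_def_field, Function.comp_apply, Function.comp_apply, AffineMap.lineMap_apply_one,
    AffineMap.lineMap_apply_zero, sub_zero, div_one] at hslope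

variable [InnerProductSpace ℝ E]

lemma strongConcaveOn_iff_convexOn_neg {s : Set E} {μ : ℝ} {f : E → ℝ} :
    StrongConcaveOn s μ f ↔ ConvexOn ℝ s fun x ↦ -f x - μ / 2 * ‖x‖ ^ 2 := by
  rw [strongConcaveOn_iff_convex, ← neg_convexOn_iff]
  congr! 2 with x
  simp only [Pi.neg_apply]
  ring

variable [CompleteSpace E] {s : Set E} {μ : ℝ} {f g : E → ℝ} {a b u w : E}

lemma StrongConcaveOn.le_add_inner_sub_of_hasGradientAt (hf : StrongConcaveOn s μ f)
    (hu : u ∈ s) (hw : w ∈ s) (ha : HasGradientAt f a u) :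
    f w ≤ f u + ⟪a, w - u⟫ - μ / 2 * ‖w - u‖ ^ 2 := by
  have hconc := strongConcaveOn_iff_convex.1 hf
  have hderiv := ha.hasFDerivAt.add ((hasStrictFDerivAt_norm_sq u).hasFDerivAt.const_mul (μ / 2))
  have key := hconc.sub_le_of_hasFDerivAt hu hw hderiv
  simp only [add_apply, smul_apply, toDual_apply_apply, innerSL_apply_apply, smul_eq_mul,
    nsmul_eq_mul, Nat.cast_ofNat, inner_sub_right, real_inner_self_eq_norm_sq] at key
  rw [norm_sub_sq_real, inner_sub_right, real_inner_comm u w]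
  linarith

lemma StrongConcaveOn.mul_norm_sub_sq_le_inner_gradient_sub (hf : StrongConcaveOn s μ f)
    (hu : u ∈ s) (hw : w ∈ s) (ha : HasGradientAt f a u) (hb : HasGradientAt f b w) :
    μ * ‖w - u‖ ^ 2 ≤ ⟪a - b, w - u⟫ := by
  have h₁ := hf.le_add_inner_sub_of_hasGradientAt hu hw ha
  have h₂ := hf.le_add_inner_sub_of_hasGradientAt hw hu hb
  rw [← neg_sub w u, inner_neg_right, norm_neg] at h₂
  rw [inner_sub_left]
  linarith

lemma IsMaxOn.inner_sub_nonpos_of_hasGradientAt (hs : Convex ℝ s) (hmax : IsMaxOn f s u)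
    (hu : u ∈ s) (hw : w ∈ s) (ha : HasGradientAt f a u) : ⟪a, w - u⟫ ≤ 0 :=
  hmax.localize.hasFDerivWithinAt_nonpos ha.hasFDerivAt.hasFDerivWithinAt
    (sub_mem_posTangentConeAt_of_segment_subset (hs.segment_subset hu hw))

lemma StrongConcaveOn.mul_norm_sub_le_of_isMaxOn (hs : Convex ℝ s) (hg : StrongConcaveOn s μ g)
    (hfu : IsMaxOn f s u) (hgw : IsMaxOn g s w) (hu : u ∈ s) (hw : w ∈ s)
    (hf : DifferentiableAt ℝ f u) (hgu : DifferentiableAt ℝ g u) (hgw' : DifferentiableAt ℝ g w) :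
    μ * ‖w - u‖ ≤ ‖gradient g u - gradient f u‖ := by
  have hmono := hg.mul_norm_sub_sq_le_inner_gradient_sub hu hw hgu.hasGradientAt hgw'.hasGradientAt
  have hoptf := hfu.inner_sub_nonpos_of_hasGradientAt hs hu hw hf.hasGradientAt
  have hoptg := hgw.inner_sub_nonpos_of_hasGradientAt hs hw hu hgw'.hasGradientAt
  rw [← neg_sub w u, inner_neg_right] at hoptg
  have key : μ * ‖w - u‖ ^ 2 ≤ ‖gradient g u - gradient f u‖ * ‖w - u‖ :=
    calc μ * ‖w - u‖ ^ 2 ≤ ⟪gradient g u - gradient f u, w - u⟫ := by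
          rw [inner_sub_left] at hmono ⊢
          linarith
      _ ≤ ‖gradient g u - gradient f u‖ * ‖w - u‖ := real_inner_le_norm _ _
  rcases (norm_nonneg (w - u)).eq_or_lt with h | h
  · rw [← h, mul_zero]
    positivity
  · exact le_of_mul_le_mul_right (by rwa [sq, ← mul_assoc] at key) h

end

lemma norm_gradV_sub_le {d1 d2 : ℕ} {F : Euc d1 → Euc d2 → ℝ} {ℓ : ℝ} (hℓ : 0 ≤ ℓ)
    (hGradLip : ∀ (ω ω' : Euc d1) (v v' : Euc d2),
      ‖gradW F ω v - gradW F ω' v'‖ ^ 2 + ‖gradV F ω v - gradV F ω' v'‖ ^ 2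
        ≤ ℓ ^ 2 * (‖ω - ω'‖ ^ 2 + ‖v - v'‖ ^ 2))
    (ω ω' : Euc d1) (v : Euc d2) : ‖gradV F ω v - gradV F ω' v‖ ≤ ℓ * ‖ω - ω'‖ := by
  have h := hGradLip ω ω' v v
  rw [sub_self, norm_zero, zero_pow two_ne_zero, add_zero, ← mul_pow] at h
  refine (pow_le_pow_iff_left₀ (norm_nonneg _) (by positivity) two_ne_zero).1 ?_
  linarith [sq_nonneg ‖gradW F ω v - gradW F ω' v‖]

theorem statement_2_general {d1 d2 : ℕ}
    (V : Set (Euc d2)) (hVcv : Convex ℝ V)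
    (F : Euc d1 → Euc d2 → ℝ) (ℓ μv : ℝ) (hℓ : 0 ≤ ℓ) (hμv : 0 < μv)
    (hdiff : Differentiable ℝ fun p : Euc d1 × Euc d2 => F p.1 p.2)
    (hGradLip : ∀ (ω ω' : Euc d1) (v v' : Euc d2),
      ‖gradW F ω v - gradW F ω' v'‖ ^ 2 + ‖gradV F ω v - gradV F ω' v'‖ ^ 2
        ≤ ℓ ^ 2 * (‖ω - ω'‖ ^ 2 + ‖v - v'‖ ^ 2))
    (hSCC : ∀ ω : Euc d1, ConvexOn ℝ V fun v => -F ω v - μv / 2 * ‖v‖ ^ 2)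
    (Vstar : Euc d1 → Euc d2)
    (hVstarMem : ∀ ω, Vstar ω ∈ V)
    (hVstarMax : ∀ ω, ∀ v ∈ V, F ω v ≤ F ω (Vstar ω)) :
    ∀ ω₁ ω₂ : Euc d1, ‖Vstar ω₁ - Vstar ω₂‖ ≤ ℓ / μv * ‖ω₁ - ω₂‖ := by
  intro ω₁ ω₂
  have hFdiff (ω : Euc d1) : Differentiable ℝ (F ω) :=
    hdiff.comp (f := fun v : Euc d2 => (ω, v)) (by fun_prop)
  have hstab : μv * ‖Vstar ω₂ - Vstar ω₁‖ ≤ ‖gradV F ω₂ (Vstar ω₁) - gradV F ω₁ (Vstar ω₁)‖ :=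
    (strongConcaveOn_iff_convexOn_neg.2 (hSCC ω₂)).mul_norm_sub_le_of_isMaxOn hVcv
      (hVstarMax ω₁) (hVstarMax ω₂) (hVstarMem ω₁) (hVstarMem ω₂)
      (hFdiff ω₁ _) (hFdiff ω₂ _) (hFdiff ω₂ _)
  have hlip := norm_gradV_sub_le hℓ hGradLip ω₂ ω₁ (Vstar ω₁)
  rw [div_mul_eq_mul_div, le_div_iff₀ hμv, norm_sub_rev, norm_sub_rev ω₁]
  linarith

/-- If `F` is differentiable with jointly `ℓ`-Lipschitz gradient and
`F(ω,·)` is `μv`-strongly concave on a nonempty closed convex set `V` for every `ω`,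
then the best-response map `ω ↦ V*(ω)` (the unique maximizer of `F(ω,·)` over `V`)
is `(ℓ/μv)`-Lipschitz. -/
theorem statement_2 {d1 d2 : ℕ}
    (V : Set (Euc d2)) (hVne : V.Nonempty) (hVcl : IsClosed V) (hVcv : Convex ℝ V)
    (F : Euc d1 → Euc d2 → ℝ) (ℓ μv : ℝ) (hℓ : 0 ≤ ℓ) (hμv : 0 < μv)
    (hdiff : Differentiable ℝ fun p : Euc d1 × Euc d2 => F p.1 p.2)
    (hGradLip : ∀ (ω ω' : Euc d1) (v v' : Euc d2),
      ‖gradW F ω v - gradW F ω' v'‖ ^ 2 + ‖gradV F ω v - gradV F ω' v'‖ ^ 2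
        ≤ ℓ ^ 2 * (‖ω - ω'‖ ^ 2 + ‖v - v'‖ ^ 2))
    (hSCC : ∀ ω : Euc d1, ConvexOn ℝ V fun v => -F ω v - μv / 2 * ‖v‖ ^ 2)
    (Vstar : Euc d1 → Euc d2)
    (hVstarMem : ∀ ω, Vstar ω ∈ V)
    (hVstarMax : ∀ ω, ∀ v ∈ V, F ω v ≤ F ω (Vstar ω))
    (hVstarUniq : ∀ ω, ∀ v ∈ V, (∀ v' ∈ V, F ω v' ≤ F ω v) → v = Vstar ω) :
    ∀ ω₁ ω₂ : Euc d1, ‖Vstar ω₁ - Vstar ω₂‖ ≤ ℓ / μv * ‖ω₁ - ω₂‖ :=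
  statement_2_general V hVcv F ℓ μv hℓ hμv hdiff hGradLip hSCC Vstar hVstarMem hVstarMax

end
end

section
/- Let F : ℝ^{d1} × ℝ^{d2} → ℝ be twice continuously differentiable and let V* : ℝ^{d1} → ℝ^{d2} be differentiable such that ∇_v F(ω, V*(ω)) = 0 for all ω and ∂_vv F(ω, V*(ω)) is invertible for all ω. Define the primal function P(ω) = F(ω, V*(ω)). Then P is twice differentiable with ∇P(ω) = ∇_ω F(ω, V*(ω)), the derivative of V* satisfies DV*(ω) = −(∂_vv F(ω,V*(ω)))⁻¹ ∘ ∂_vω F(ω,V*(ω)), and the Hessian of P equals the total Hessian: ∇²P(ω) = ∂_ωω F(ω,V*(ω)) − ∂_ωv F(ω,V*(ω)) ∘ (∂_vv F(ω,V*(ω)))⁻¹ ∘ ∂_vω F(ω,V*(ω)) = D_ωω F(ω, V*(ω)). -/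
open MeasureTheory ProbabilityTheory
open scoped BigOperators NNReal ENNReal

noncomputable section

/-! Differentiating the critical-point identity `∇_v F(ω, V*(ω)) = 0` along the graph of `V*`
gives `∂_vω F + ∂_vv F ∘ DV* = 0`, which is solved for `DV*` since `∂_vv F` is invertible. The
same chain rule applied to `P` kills the `∂_v F` term (envelope theorem), so
`∇P(ω) = ∇_ω F(ω, V*(ω))`; differentiating this once more along the graph gives
`∂_ωω F + ∂_ωv F ∘ DV*`, the total Hessian. -/

open InnerProductSpace ContinuousLinearMap Function

section PartialDerivatives

variable {𝕜 E F Y : Type*} [NontriviallyNormedField 𝕜]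
  [NormedAddCommGroup E] [NormedSpace 𝕜 E] [NormedAddCommGroup F] [NormedSpace 𝕜 F]
  [NormedAddCommGroup Y] [NormedSpace 𝕜 Y] {g : E → F → Y}

theorem fderiv_partial_fst {x : E} {y : F} (hg : DifferentiableAt 𝕜 (uncurry g) (x, y)) :
    fderiv 𝕜 (fun x' => g x' y) x = (fderiv 𝕜 (uncurry g) (x, y)).comp (inl 𝕜 E F) :=
  (hg.hasFDerivAt.comp x (hasFDerivAt_prodMk_left (𝕜 := 𝕜) x y) :).fderiv

theorem fderiv_partial_snd {x : E} {y : F} (hg : DifferentiableAt 𝕜 (uncurry g) (x, y)) :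
    fderiv 𝕜 (fun y' => g x y') y = (fderiv 𝕜 (uncurry g) (x, y)).comp (inr 𝕜 E F) :=
  (hg.hasFDerivAt.comp y (hasFDerivAt_prodMk_right x y) :).fderiv

variable {V : E → F} {x : E}

theorem DifferentiableAt.comp_graph (hg : DifferentiableAt 𝕜 (uncurry g) (x, V x))
    (hV : DifferentiableAt 𝕜 V x) : DifferentiableAt 𝕜 (fun x' => g x' (V x')) x :=
  (hg.comp x (differentiableAt_id.prodMk hV) :)

theorem fderiv_comp_graph (hg : DifferentiableAt 𝕜 (uncurry g) (x, V x))
    (hV : DifferentiableAt 𝕜 V x) :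
    fderiv 𝕜 (fun x' => g x' (V x')) x
      = fderiv 𝕜 (fun x' => g x' (V x)) x + (fderiv 𝕜 (fun y => g x y) (V x)).comp (fderiv 𝕜 V x) := by
  have htotal : HasFDerivAt (fun x' => g x' (V x')) _ x :=
    (hg.hasFDerivAt.comp x ((hasFDerivAt_id x).prodMk hV.hasFDerivAt) :)
  rw [htotal.fderiv, fderiv_partial_fst hg, fderiv_partial_snd hg]
  ext v
  simp [← map_add]

end PartialDerivatives

section PartialGradients

variable {E F : Type*} [NormedAddCommGroup E] [NormedAddCommGroup F] {g : E → F → ℝ}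

theorem ContDiff.differentiable_partial_gradient_fst [InnerProductSpace ℝ E] [CompleteSpace E]
    [NormedSpace ℝ F] (hg : ContDiff ℝ 2 (uncurry g)) :
    Differentiable ℝ fun p : E × F => gradient (fun x => g x p.2) p.1 := by
  have hd : Differentiable ℝ (uncurry g) := hg.differentiable (by norm_num)
  have hd' : Differentiable ℝ (fderiv ℝ (uncurry g)) :=
    (hg.fderiv_right (m := 1) (by norm_num)).differentiable (by norm_num)
  have heq : (fun p : E × F => gradient (fun x => g x p.2) p.1)
      = fun p => (toDual ℝ E).symm ((fderiv ℝ (uncurry g) p).comp (inl ℝ E F)) :=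
    funext fun p => by rw [gradient, fderiv_partial_fst (hd p)]
  rw [heq]
  exact (toDual ℝ E).symm.differentiable.comp (hd'.clm_comp (differentiable_const _))

theorem ContDiff.differentiable_partial_gradient_snd [NormedSpace ℝ E] [InnerProductSpace ℝ F]
    [CompleteSpace F] (hg : ContDiff ℝ 2 (uncurry g)) :
    Differentiable ℝ fun p : E × F => gradient (fun y => g p.1 y) p.2 :=
  have hswap : ContDiff ℝ 2 (uncurry (flip g)) := hg.comp (contDiff_snd.prodMk contDiff_fst)
  hswap.differentiable_partial_gradient_fst.comp (differentiable_snd.prodMk differentiable_fst)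

end PartialGradients

theorem ContinuousLinearMap.IsInvertible.eq_neg_inverse_comp_of_add_comp_eq_zero
    {𝕜 E F G : Type*} [NontriviallyNormedField 𝕜] [NormedAddCommGroup E] [NormedSpace 𝕜 E]
    [NormedAddCommGroup F] [NormedSpace 𝕜 F] [NormedAddCommGroup G] [NormedSpace 𝕜 G]
    {A : E →L[𝕜] G} {B : F →L[𝕜] G} {D : E →L[𝕜] F} (hB : B.IsInvertible)
    (h : A + B.comp D = 0) : D = -(B.inverse.comp A) :=
  calc D = (B.inverse.comp B).comp D := by rw [hB.inverse_comp_self, id_comp]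
    _ = B.inverse.comp (-A) := by rw [comp_assoc, eq_neg_of_add_eq_zero_right h]
    _ = -(B.inverse.comp A) := comp_neg _ _

/-- If `F` is twice continuously differentiable, `V*` is differentiable
with `∇_v F(ω, V*(ω)) = 0` and `∂_vv F(ω, V*(ω))` invertible for all `ω`, then the primal
function `P(ω) = F(ω, V*(ω))` is twice differentiable, `∇P(ω) = ∇_ω F(ω, V*(ω))`,
`DV*(ω) = −(∂_vv F)⁻¹ ∘ ∂_vω F`, and `∇²P(ω) = D_ωω F(ω, V*(ω))`. -/
theorem statement_4 {d1 d2 : ℕ}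
    (F : Euc d1 → Euc d2 → ℝ)
    (hF : ContDiff ℝ 2 fun p : Euc d1 × Euc d2 => F p.1 p.2)
    (Vstar : Euc d1 → Euc d2) (hVdiff : Differentiable ℝ Vstar)
    (hVcrit : ∀ ω : Euc d1, gradV F ω (Vstar ω) = 0)
    (hVinv : ∀ ω : Euc d1, ∃ e : Euc d2 ≃L[ℝ] Euc d2,
      (e : Euc d2 →L[ℝ] Euc d2) = pVV F ω (Vstar ω))
    (P : Euc d1 → ℝ) (hP : P = fun ω => F ω (Vstar ω)) :
    Differentiable ℝ P ∧
    Differentiable ℝ (fun ω => gradient P ω) ∧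
    (∀ ω : Euc d1, gradient P ω = gradW F ω (Vstar ω)) ∧
    (∀ ω : Euc d1, fderiv ℝ Vstar ω
        = -(((pVV F ω (Vstar ω)).inverse).comp (pVW F ω (Vstar ω)))) ∧
    (∀ ω : Euc d1, fderiv ℝ (fun ω' => gradient P ω') ω
        = (pWW F ω (Vstar ω))
            - (pWV F ω (Vstar ω)).comp
                (((pVV F ω (Vstar ω)).inverse).comp (pVW F ω (Vstar ω)))) ∧
    (∀ ω : Euc d1, fderiv ℝ (fun ω' => gradient P ω') ω = Dww F ω (Vstar ω)) := by
  have hFd : Differentiable ℝ (uncurry F) := hF.differentiable (by norm_num)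
  have hgradW : Differentiable ℝ (uncurry (gradW F)) := hF.differentiable_partial_gradient_fst
  have hgradV : Differentiable ℝ (uncurry (gradV F)) := hF.differentiable_partial_gradient_snd
  have hgradP : ∀ ω, gradient P ω = gradW F ω (Vstar ω) := by
    intro ω
    have hcrit : fderiv ℝ (fun v => F ω v) (Vstar ω) = 0 := by
      simpa [gradV, gradient] using hVcrit ω
    subst hP
    simp only [gradient, gradW, fderiv_comp_graph (hFd _) (hVdiff ω), hcrit, zero_comp, add_zero]
  have hDV : ∀ ω, fderiv ℝ Vstar ω
      = -(((pVV F ω (Vstar ω)).inverse).comp (pVW F ω (Vstar ω))) := by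
    intro ω
    refine ContinuousLinearMap.IsInvertible.eq_neg_inverse_comp_of_add_comp_eq_zero (hVinv ω) ?_
    rw [pVW, pVV, ← fderiv_comp_graph (hgradV _) (hVdiff ω)]
    simp [hVcrit]
  have hHess : ∀ ω, fderiv ℝ (fun ω' => gradient P ω') ω
      = pWW F ω (Vstar ω)
        - (pWV F ω (Vstar ω)).comp (((pVV F ω (Vstar ω)).inverse).comp (pVW F ω (Vstar ω))) := by
    intro ω
    rw [funext hgradP, fderiv_comp_graph (hgradW _) (hVdiff ω), hDV ω, comp_neg, sub_eq_add_neg]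
    rfl
  refine ⟨?_, ?_, hgradP, hDV, hHess, hHess⟩
  · subst hP
    exact fun ω => (hFd _).comp_graph (hVdiff ω)
  · rw [funext hgradP]
    exact fun ω => (hgradW _).comp_graph (hVdiff ω)

end
end

section
/- Let f : ℝ^{d1} × ℝ^{d2} → ℝ be twice differentiable with ℓ-Lipschitz gradient and μ_v-strongly concave in v for every ω. Then at every point (ω,v) the block ∂_vv f(ω,v) is invertible with ‖(∂_vv f(ω,v))⁻¹‖ ≤ 1/μ_v, and the total Hessian satisfies ‖D_ωω f(ω,v)‖ ≤ ℓ + ℓ²/μ_v. -/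
open MeasureTheory ProbabilityTheory
open scoped BigOperators NNReal ENNReal

noncomputable section

/-!
Strong concavity in `v` gives `⟪∂_vv f h, h⟫ ≤ -μ ‖h‖²`, so `-∂_vv f` is a coercive form and, by
Lax–Milgram, `∂_vv f` is invertible; the same inequality gives `‖∂_vv f h‖ ≥ μ ‖h‖`, i.e.
`‖(∂_vv f)⁻¹‖ ≤ 1/μ`. The Lipschitz bound on the joint gradient bounds each mixed block of the
Hessian by `ℓ`, and the Schur complement `D_ωω f` then has norm at most `ℓ + ℓ · (1/μ) · ℓ`.
-/

open Set RealInnerProductSpace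

section Hilbert

variable {E : Type*} [NormedAddCommGroup E] [InnerProductSpace ℝ E]

theorem mul_norm_le_norm_apply_of_inner_apply_le {T : E →L[ℝ] E} {μ : ℝ}
    (hT : ∀ x, ⟪T x, x⟫ ≤ -(μ * ‖x‖ ^ 2)) (x : E) : μ * ‖x‖ ≤ ‖T x‖ := by
  rcases eq_or_ne x 0 with rfl | hx
  · simp
  refine le_of_mul_le_mul_right ?_ (norm_pos_iff.mpr hx)
  calc μ * ‖x‖ * ‖x‖ = μ * ‖x‖ ^ 2 := by ring
    _ ≤ -⟪T x, x⟫ := le_neg.mpr (hT x)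
    _ ≤ ‖T x‖ * ‖x‖ := (neg_le_abs _).trans (abs_real_inner_le_norm _ _)

theorem exists_continuousLinearEquiv_of_inner_apply_le [CompleteSpace E] {T : E →L[ℝ] E}
    {μ : ℝ} (hμ : 0 < μ) (hT : ∀ x, ⟪T x, x⟫ ≤ -(μ * ‖x‖ ^ 2)) :
    ∃ e : E ≃L[ℝ] E, (e : E →L[ℝ] E) = T ∧ ‖(e.symm : E →L[ℝ] E)‖ ≤ 1 / μ := by
  -- Lax–Milgram for the coercive form `(x, y) ↦ -⟪T x, y⟫`
  have hcoercive : IsCoercive (-(innerSL ℝ ∘L T)) :=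
    ⟨μ, hμ, fun x => by
      change μ * ‖x‖ * ‖x‖ ≤ -⟪T x, x⟫
      linarith [hT x]⟩
  let e := hcoercive.continuousLinearEquivOfBilin.trans (ContinuousLinearEquiv.neg ℝ)
  have he : (e : E →L[ℝ] E) = T := by
    ext1 x
    refine ext_inner_right ℝ fun y => ?_
    simp only [e, ContinuousLinearEquiv.coe_coe, ContinuousLinearEquiv.trans_apply,
      ContinuousLinearEquiv.neg_apply, IsCoercive.continuousLinearEquivOfBilin_apply,
      neg_apply, ContinuousLinearMap.comp_apply, inner_neg_left, neg_neg]
    rfl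
  refine ⟨e, he, ContinuousLinearMap.opNorm_le_bound _ (by positivity) fun y => ?_⟩
  have hy := mul_norm_le_norm_apply_of_inner_apply_le hT (e.symm y)
  rw [← he, ContinuousLinearEquiv.coe_coe, e.apply_symm_apply] at hy
  rw [ContinuousLinearEquiv.coe_coe, one_div_mul_eq_div, le_div_iff₀ hμ, mul_comm]
  exact hy

end Hilbert

section Gradient

variable {E : Type*} [NormedAddCommGroup E] [InnerProductSpace ℝ E] [CompleteSpace E]

theorem ContDiff.differentiable_gradient {g : E → ℝ} (hg : ContDiff ℝ 2 g) :
    Differentiable ℝ (gradient g) :=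
  -- over `ℝ` the conjugate-linear Riesz isomorphism is linear
  let riesz : StrongDual ℝ E ≃L[ℝ] E := (InnerProductSpace.toDual ℝ E).symm.toContinuousLinearEquiv
  riesz.differentiable.comp ((hg.fderiv_right (by norm_num)).differentiable one_ne_zero)

/-- Differentiate at `0` the monotone derivative of the convex function
`t ↦ -g (x + t • h) - μ/2 ‖x + t • h‖²`. -/
theorem inner_fderiv_gradient_apply_le {g : E → ℝ} {μ : ℝ}
    (hconv : ConvexOn ℝ univ fun y => -g y - μ / 2 * ‖y‖ ^ 2) (hg : Differentiable ℝ g) {x : E}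
    (hgx : DifferentiableAt ℝ (gradient g) x) (h : E) :
    ⟪fderiv ℝ (gradient g) x h, h⟫ ≤ -(μ * ‖h‖ ^ 2) := by
  let line : ℝ →ᵃ[ℝ] E := AffineMap.lineMap x (x + h)
  have hline : ∀ t, HasDerivAt line h t := fun t => by
    simpa using AffineMap.hasDerivAt_lineMap (a := x) (b := x + h) (x := t)
  let ψ' : ℝ → ℝ := fun t => -⟪gradient g (line t), h⟫ - μ * ⟪line t, h⟫
  have hψ : ∀ t, HasDerivAt (fun t => -g (line t) - μ / 2 * ‖line t‖ ^ 2) (ψ' t) t := fun t => by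
    have := ((hg _).hasFDerivAt.comp_hasDerivAt t (hline t)).neg.sub
      ((hline t).norm_sq.const_mul (μ / 2))
    rw [← inner_gradient_left] at this
    exact this.congr_deriv (by ring)
  have hmono : Monotone ψ' := by
    have := (hconv.comp_affineMap line).monotoneOn_deriv fun t _ => (hψ t).differentiableAt
    rw [preimage_univ, monotoneOn_univ] at this
    convert this using 1
    exact funext fun t => (hψ t).deriv.symm
  have hψ' : HasDerivAt ψ' (-⟪fderiv ℝ (gradient g) x h, h⟫ - μ * ⟪h, h⟫) 0 := by
    have hgrad : HasDerivAt (fun t => gradient g (line t)) (fderiv ℝ (gradient g) x h) 0 :=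
      hgx.hasFDerivAt.comp_hasDerivAt_of_eq 0 (hline 0) (by simp [line])
    have := (hgrad.inner ℝ (hasDerivAt_const 0 h)).neg.sub
      (((hline 0).inner ℝ (hasDerivAt_const 0 h)).const_mul μ)
    simp only [inner_zero_right, zero_add] at this
    exact this
  have := hψ'.deriv ▸ hmono.deriv_nonneg (x := 0)
  rw [real_inner_self_eq_norm_sq] at this
  linarith

end Gradient

theorem norm_fderiv_le_of_sq_norm_sub_le {E F : Type*} [NormedAddCommGroup E] [NormedSpace ℝ E]
    [NormedAddCommGroup F] [NormedSpace ℝ F] {φ : E → F} {x₀ : E} {ℓ : ℝ} (hℓ : 0 ≤ ℓ)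
    (hφ : ∀ x, ‖φ x - φ x₀‖ ^ 2 ≤ ℓ ^ 2 * ‖x - x₀‖ ^ 2) : ‖fderiv ℝ φ x₀‖ ≤ ℓ :=
  norm_fderiv_le_of_lip' ℝ hℓ <| Filter.Eventually.of_forall fun x =>
    (pow_le_pow_iff_left₀ (norm_nonneg _) (by positivity) two_ne_zero).mp
      (by rw [mul_pow]; exact hφ x)

theorem ContinuousLinearMap.norm_sub_comp_comp_le {E F G H : Type*} [NormedAddCommGroup E]
    [NormedSpace ℝ E] [NormedAddCommGroup F] [NormedSpace ℝ F] [NormedAddCommGroup G]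
    [NormedSpace ℝ G] [NormedAddCommGroup H] [NormedSpace ℝ H] (A : E →L[ℝ] F) (B : H →L[ℝ] F)
    (C : G →L[ℝ] H) (D : E →L[ℝ] G) : ‖A - B ∘L C ∘L D‖ ≤ ‖A‖ + ‖B‖ * (‖C‖ * ‖D‖) :=
  (norm_sub_le _ _).trans <| add_le_add_right
    ((opNorm_comp_le _ _).trans (mul_le_mul_of_nonneg_left (opNorm_comp_le _ _) (norm_nonneg _))) _

def GradLipschitzWith {d1 d2 : ℕ} (ℓ : ℝ) (f : Euc d1 → Euc d2 → ℝ) : Prop :=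
  ∀ (ω ω' : Euc d1) (v v' : Euc d2),
    ‖gradW f ω v - gradW f ω' v'‖ ^ 2 + ‖gradV f ω v - gradV f ω' v'‖ ^ 2
      ≤ ℓ ^ 2 * (‖ω - ω'‖ ^ 2 + ‖v - v'‖ ^ 2)

namespace GradLipschitzWith

variable {d1 d2 : ℕ} {f : Euc d1 → Euc d2 → ℝ} {ℓ : ℝ}

theorem norm_pWW_le (hf : GradLipschitzWith ℓ f) (hℓ : 0 ≤ ℓ) (ω : Euc d1) (v : Euc d2) :
    ‖pWW f ω v‖ ≤ ℓ :=
  norm_fderiv_le_of_sq_norm_sub_le hℓ fun ω' => by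
    have := hf ω' ω v v
    simp only [sub_self, norm_zero] at this
    nlinarith [sq_nonneg ‖gradV f ω' v - gradV f ω v‖]

theorem norm_pWV_le (hf : GradLipschitzWith ℓ f) (hℓ : 0 ≤ ℓ) (ω : Euc d1) (v : Euc d2) :
    ‖pWV f ω v‖ ≤ ℓ :=
  norm_fderiv_le_of_sq_norm_sub_le hℓ fun v' => by
    have := hf ω ω v' v
    simp only [sub_self, norm_zero] at this
    nlinarith [sq_nonneg ‖gradV f ω v' - gradV f ω v‖]

theorem norm_pVW_le (hf : GradLipschitzWith ℓ f) (hℓ : 0 ≤ ℓ) (ω : Euc d1) (v : Euc d2) :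
    ‖pVW f ω v‖ ≤ ℓ :=
  norm_fderiv_le_of_sq_norm_sub_le hℓ fun ω' => by
    have := hf ω' ω v v
    simp only [sub_self, norm_zero] at this
    nlinarith [sq_nonneg ‖gradW f ω' v - gradW f ω v‖]

end GradLipschitzWith

/-- For a twice differentiable `f` with `ℓ`-Lipschitz gradient which is
`μv`-strongly concave in `v`, the block `∂_vv f(ω,v)` is invertible with inverse of
operator norm at most `1/μv`, and the total Hessian satisfies
`‖D_ωω f(ω,v)‖ ≤ ℓ + ℓ²/μv`. -/
theorem statement_5 {d1 d2 : ℕ}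
    (f : Euc d1 → Euc d2 → ℝ) (ℓ μv : ℝ) (hℓ : 0 ≤ ℓ) (hμv : 0 < μv)
    (hsmooth : ContDiff ℝ 2 fun p : Euc d1 × Euc d2 => f p.1 p.2)
    (hGradLip : ∀ (ω ω' : Euc d1) (v v' : Euc d2),
      ‖gradW f ω v - gradW f ω' v'‖ ^ 2 + ‖gradV f ω v - gradV f ω' v'‖ ^ 2
        ≤ ℓ ^ 2 * (‖ω - ω'‖ ^ 2 + ‖v - v'‖ ^ 2))
    (hSCC : ∀ ω : Euc d1, ConvexOn ℝ Set.univ fun v => -f ω v - μv / 2 * ‖v‖ ^ 2) :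
    ∀ (ω : Euc d1) (v : Euc d2),
      (∃ e : Euc d2 ≃L[ℝ] Euc d2,
        (e : Euc d2 →L[ℝ] Euc d2) = pVV f ω v ∧ ‖(e.symm : Euc d2 →L[ℝ] Euc d2)‖ ≤ 1 / μv) ∧
      ‖Dww f ω v‖ ≤ ℓ + ℓ ^ 2 / μv := by
  intro ω v
  have hf : GradLipschitzWith ℓ f := hGradLip
  have hfω : ContDiff ℝ 2 (f ω) := hsmooth.comp (contDiff_const.prodMk contDiff_id)
  obtain ⟨e, he, he_symm⟩ := exists_continuousLinearEquiv_of_inner_apply_le (T := pVV f ω v) hμv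
    (inner_fderiv_gradient_apply_le (hSCC ω) (hfω.differentiable two_ne_zero)
      (hfω.differentiable_gradient v))
  refine ⟨⟨e, he, he_symm⟩, ?_⟩
  rw [Dww, ← he, ContinuousLinearMap.inverse_equiv]
  calc _ ≤ ‖pWW f ω v‖ + ‖pWV f ω v‖ * (‖(e.symm : Euc d2 →L[ℝ] Euc d2)‖ * ‖pVW f ω v‖) :=
        ContinuousLinearMap.norm_sub_comp_comp_le _ _ _ _
    _ ≤ ℓ + ℓ * (1 / μv * ℓ) := by
        gcongr
        exacts [hf.norm_pWW_le hℓ ω v, hf.norm_pWV_le hℓ ω v, hf.norm_pVW_le hℓ ω v]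
    _ = ℓ + ℓ ^ 2 / μv := by ring
end
end

section
/- Let F : ℝ^{d1} × ℝ^{d2} → ℝ be L-Lipschitz (the population loss), and let W ⊆ ℝ^{d1}, V ⊆ ℝ^{d2} be nonempty compact sets with (ω*_S, ν*_S) ∈ W × V. Suppose f(·,·;z) is L-Lipschitz for every z ∈ S, and the total Hessians A := D_ωω F_S(ω*_S,ν*_S) and B := D_vv F_S(ω*_S,ν*_S) satisfy ‖A x‖ ≥ μ‖x‖ and ‖B y‖ ≥ μ‖y‖ for all x, y. Define ω̃ := ω*_S + (1/n) A⁻¹ ∑_{z∈U} ∇_ω f(ω*_S,ν*_S;z) and ṽ := ν*_S + (1/n) B⁻¹ ∑_{z∈U} ∇_v f(ω*_S,ν*_S;z), and let γ₁ = N(0, σ₁²I_{d1}), γ₂ = N(0, σ₂²I_{d2}) for σ₁, σ₂ > 0. Then max_{v∈V} ∫ F(ω̃ + ξ₁, v) dγ₁(ξ₁) − min_{ω∈W} ∫ F(ω, ṽ + ξ₂) dγ₂(ξ₂) ≤ 2mL²/(μn) + (√{d_1}σ₁ + √{d_2}σ₂)L + (max_{v∈V} F(ω*_S, v) − min_{ω∈W}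 F(ω, ν*_S)). -/
open MeasureTheory ProbabilityTheory
open scoped BigOperators NNReal ENNReal

noncomputable section

/-! Each per-sample gradient has norm at most `L`, and the lower bound `μ‖x‖ ≤ ‖Dx‖` makes the
total Hessians invertible with `‖D⁻¹‖ ≤ 1/μ`, so the unlearning step moves `(ω*_S, ν*_S)` by at
most `mL/(μn)` in each variable. Since `F` is `L`-Lipschitz, shifting an argument by `δ` and
averaging over a Gaussian perturbation `ξ` changes `F` by at most `L (δ + E‖ξ‖)`, and by Jensen
`E‖ξ‖ ≤ √(E‖ξ‖²) = √d σ`. Comparing the max and the min with those at `(ω*_S, ν*_S)` gives the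
bound. -/

section Gaussian

instance (d : ℕ) (σ : ℝ) : IsProbabilityMeasure (_root_.stdGaussian d σ) :=
  Measure.isProbabilityMeasure_map (by fun_prop)

lemma integral_sq_gaussianReal_zero (v : ℝ≥0) : ∫ x, x ^ 2 ∂gaussianReal 0 v = v := by
  have h := variance_of_integral_eq_zero aemeasurable_id
    (integral_id_gaussianReal (μ := 0) (v := v))
  rw [variance_id_gaussianReal] at h
  simpa using h.symm

lemma integrable_sq_gaussianReal (v : ℝ≥0) : Integrable (fun x => x ^ 2) (gaussianReal 0 v) :=
  (memLp_id_gaussianReal 2).integrable_sq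

lemma sq_integral_le_integral_sq {Ω : Type*} [MeasurableSpace Ω] {μ : Measure Ω}
    [IsProbabilityMeasure μ] {g : Ω → ℝ} (hg : MemLp g 2 μ) :
    (∫ x, g x ∂μ) ^ 2 ≤ ∫ x, g x ^ 2 ∂μ := by
  have h := variance_nonneg g μ
  rw [variance_eq_sub hg] at h
  simpa using h

lemma norm_equiv_symm_sq {d : ℕ} (x : Fin d → ℝ) :
    ‖(EuclideanSpace.equiv (Fin d) ℝ).symm x‖ ^ 2 = ∑ i, x i ^ 2 := by
  simp [EuclideanSpace.norm_sq_eq]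

lemma integrable_coord_sq_pi_gaussianReal {d : ℕ} (v : ℝ≥0) (i : Fin d) :
    Integrable (fun x : Fin d → ℝ => x i ^ 2) (Measure.pi fun _ => gaussianReal 0 v) :=
  integrable_comp_eval (X := fun _ => ℝ) (μ := fun _ => gaussianReal 0 v) (i := i)
    (f := fun t => t ^ 2) (integrable_sq_gaussianReal v)

lemma integrable_norm_sq_stdGaussian (d : ℕ) (σ : ℝ) :
    Integrable (fun ξ : Euc d => ‖ξ‖ ^ 2) (_root_.stdGaussian d σ) := by
  rw [_root_.stdGaussian, integrable_map_measure (by fun_prop) (by fun_prop)]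
  simp only [Function.comp_def, norm_equiv_symm_sq]
  exact integrable_finsetSum _ fun i _ => integrable_coord_sq_pi_gaussianReal _ i

lemma integral_norm_sq_stdGaussian (d : ℕ) (σ : ℝ) :
    ∫ ξ, ‖ξ‖ ^ 2 ∂_root_.stdGaussian d σ = d * σ ^ 2 := by
  rw [_root_.stdGaussian, integral_map (by fun_prop) (by fun_prop)]
  simp only [norm_equiv_symm_sq]
  rw [integral_finsetSum _ fun i _ => integrable_coord_sq_pi_gaussianReal _ i]
  have hcoord (i : Fin d) :
      ∫ x : Fin d → ℝ, x i ^ 2 ∂(Measure.pi fun _ => gaussianReal 0 (σ ^ 2).toNNReal) = σ ^ 2 := by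
    rw [integral_comp_eval (X := fun _ => ℝ) (i := i) (f := fun t => t ^ 2) (by fun_prop),
      integral_sq_gaussianReal_zero, Real.coe_toNNReal _ (sq_nonneg σ)]
  simp [hcoord]

lemma memLp_norm_stdGaussian (d : ℕ) (σ : ℝ) :
    MemLp (fun ξ : Euc d => ‖ξ‖) 2 (_root_.stdGaussian d σ) :=
  (memLp_two_iff_integrable_sq (by fun_prop)).2 (integrable_norm_sq_stdGaussian d σ)

lemma integral_norm_stdGaussian_le (d : ℕ) {σ : ℝ} (hσ : 0 ≤ σ) :
    ∫ ξ, ‖ξ‖ ∂_root_.stdGaussian d σ ≤ √d * σ := by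
  have h := sq_integral_le_integral_sq (memLp_norm_stdGaussian d σ)
  rw [integral_norm_sq_stdGaussian] at h
  calc ∫ ξ, ‖ξ‖ ∂_root_.stdGaussian d σ ≤ √(d * σ ^ 2) := Real.le_sqrt_of_sq_le h
    _ = √d * σ := by rw [Real.sqrt_mul d.cast_nonneg, Real.sqrt_sq hσ]

end Gaussian

section Lipschitz

variable {E F : Type*} [SeminormedAddCommGroup E] [SeminormedAddCommGroup F]

lemma lipschitzWith_left_of_sq_le {g : E → F → ℝ} {L : ℝ} (hL : 0 ≤ L)
    (hg : ∀ x x' y y', (g x y - g x' y') ^ 2 ≤ L ^ 2 * (‖x - x'‖ ^ 2 + ‖y - y'‖ ^ 2))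
    (y : F) :
    LipschitzWith L.toNNReal (g · y) :=
  LipschitzWith.of_dist_le_mul fun x x' => by
    rw [Real.dist_eq, dist_eq_norm, Real.coe_toNNReal L hL]
    exact abs_le_of_sq_le_sq (by simpa [mul_pow] using hg x x' y y) (by positivity)

lemma lipschitzWith_right_of_sq_le {g : E → F → ℝ} {L : ℝ} (hL : 0 ≤ L)
    (hg : ∀ x x' y y', (g x y - g x' y') ^ 2 ≤ L ^ 2 * (‖x - x'‖ ^ 2 + ‖y - y'‖ ^ 2))
    (x : E) :
    LipschitzWith L.toNNReal (g x ·) :=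
  lipschitzWith_left_of_sq_le (g := fun y x => g x y) hL
    (fun y y' x x' => (hg x x' y y').trans_eq (by ring)) x

end Lipschitz

lemma norm_gradient_le_of_lipschitzWith {E : Type*} [NormedAddCommGroup E] [InnerProductSpace ℝ E]
    [CompleteSpace E] {g : E → ℝ} {K : ℝ≥0} (hg : LipschitzWith K g) (x : E) :
    ‖gradient g x‖ ≤ K := by
  rw [gradient, LinearIsometryEquiv.norm_map]
  exact norm_fderiv_le_of_lipschitz ℝ hg

section Inverse

variable {E : Type*} [NormedAddCommGroup E] [NormedSpace ℝ E] [FiniteDimensional ℝ E]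
  {A : E →L[ℝ] E} {μ : ℝ}

lemma ContinuousLinearMap.isInvertible_of_mul_norm_le (hμ : 0 < μ)
    (hA : ∀ x, μ * ‖x‖ ≤ ‖A x‖) : A.IsInvertible := by
  have hinj : Function.Injective (A : E →ₗ[ℝ] E) := by
    refine (injective_iff_map_eq_zero _).2 fun x hx => norm_le_zero_iff.1 ?_
    have := hA x
    rw [show A x = 0 from hx, norm_zero] at this
    exact nonpos_of_mul_nonpos_right this hμ
  exact ⟨(LinearEquiv.ofInjectiveEndo _ hinj).toContinuousLinearEquiv, rfl⟩

lemma ContinuousLinearMap.norm_inverse_apply_le (hμ : 0 < μ) (hA : ∀ x, μ * ‖x‖ ≤ ‖A x‖)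
    (y : E) : ‖A.inverse y‖ ≤ ‖y‖ / μ := by
  have hy : y = A (A.inverse y) :=
    ((A.isInvertible_of_mul_norm_le hμ hA).inverse_apply_eq).1 rfl
  rw [le_div_iff₀ hμ, mul_comm]
  calc μ * ‖A.inverse y‖ ≤ ‖A (A.inverse y)‖ := hA _
    _ = ‖y‖ := by rw [← hy]

lemma norm_smul_inverse_sum_le (hμ : 0 < μ) (hA : ∀ x, μ * ‖x‖ ≤ ‖A x‖) {ι : Type*}
    (U : Finset ι) {g : ι → E} {L : ℝ} (hg : ∀ i ∈ U, ‖g i‖ ≤ L) (n : ℕ) :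
    ‖(1 / (n : ℝ)) • A.inverse (∑ i ∈ U, g i)‖ ≤ U.card * L / (μ * n) := by
  have hsum : ‖∑ i ∈ U, g i‖ ≤ U.card * L := by
    simpa using norm_sum_le_of_le U hg
  calc ‖(1 / (n : ℝ)) • A.inverse (∑ i ∈ U, g i)‖
        = ‖A.inverse (∑ i ∈ U, g i)‖ / n := by
        rw [norm_smul, Real.norm_eq_abs, abs_of_nonneg (by positivity), one_div_mul_eq_div]
    _ ≤ ‖∑ i ∈ U, g i‖ / μ / n := by gcongr; exact A.norm_inverse_apply_le hμ hA _
    _ ≤ U.card * L / μ / n := by gcongr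
    _ = U.card * L / (μ * n) := by rw [div_div]

end Inverse

lemma abs_integral_comp_add_sub_le {E : Type*} [NormedAddCommGroup E] [MeasurableSpace E]
    [OpensMeasurableSpace E] {γ : Measure E} [IsProbabilityMeasure γ]
    (hγ : Integrable (fun ξ => ‖ξ‖) γ) {h : E → ℝ} {K : ℝ≥0} (hh : LipschitzWith K h)
    (a b : E) :
    |∫ ξ, h (a + ξ) ∂γ - h b| ≤ K * (‖a - b‖ + ∫ ξ, ‖ξ‖ ∂γ) := by
  have hpointwise (ξ : E) : ‖h (a + ξ) - h b‖ ≤ K * (‖a - b‖ + ‖ξ‖) := by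
    rw [← dist_eq_norm]
    refine (hh.dist_le_mul _ _).trans ?_
    gcongr
    rw [dist_eq_norm, add_sub_right_comm]
    exact norm_add_le _ _
  have hbound : Integrable (fun ξ => (K : ℝ) * (‖a - b‖ + ‖ξ‖)) γ :=
    ((integrable_const _).add hγ).const_mul _
  have hcont : Continuous fun ξ => h (a + ξ) - h b :=
    (hh.continuous.comp (continuous_const_add a)).sub continuous_const
  have hdiff : Integrable (fun ξ => h (a + ξ) - h b) γ :=
    hbound.mono' hcont.aestronglyMeasurable (ae_of_all _ hpointwise)
  have hcomp : Integrable (fun ξ => h (a + ξ)) γ :=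
    (hdiff.add (integrable_const (h b))).congr (ae_of_all _ fun ξ => sub_add_cancel _ _)
  calc |∫ ξ, h (a + ξ) ∂γ - h b| = ‖∫ ξ, (h (a + ξ) - h b) ∂γ‖ := by
        rw [integral_sub hcomp (integrable_const _), integral_const, probReal_univ, one_smul,
          Real.norm_eq_abs]
    _ ≤ ∫ ξ, (K : ℝ) * (‖a - b‖ + ‖ξ‖) ∂γ :=
        norm_integral_le_of_norm_le hbound (ae_of_all _ hpointwise)
    _ = K * (‖a - b‖ + ∫ ξ, ‖ξ‖ ∂γ) := by
        rw [integral_const_mul, integral_add (integrable_const _) hγ, integral_const, probReal_univ,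
          one_smul]

lemma abs_integral_stdGaussian_comp_add_sub_le {d : ℕ} {σ : ℝ} (hσ : 0 ≤ σ)
    {h : Euc d → ℝ} {L : ℝ} (hL : 0 ≤ L) (hh : LipschitzWith L.toNNReal h) {a b : Euc d} {r : ℝ}
    (hab : ‖a - b‖ ≤ r) :
    |∫ ξ, h (a + ξ) ∂_root_.stdGaussian d σ - h b| ≤ L * (r + √d * σ) := by
  have hbound := abs_integral_comp_add_sub_le
    ((memLp_norm_stdGaussian d σ).integrable one_le_two) hh a b
  rw [Real.coe_toNNReal L hL] at hbound
  exact hbound.trans (by gcongr; exact integral_norm_stdGaussian_le d hσ)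

section ImageBounds

variable {α : Type*} {s : Set α} {φ ψ : α → ℝ} {c : ℝ}

lemma csSup_image_le_csSup_image_add (hs : s.Nonempty) (hψ : BddAbove (ψ '' s))
    (h : ∀ x ∈ s, φ x ≤ ψ x + c) : sSup (φ '' s) ≤ sSup (ψ '' s) + c :=
  csSup_le (hs.image _) <| by
    rintro _ ⟨x, hx, rfl⟩
    exact (h x hx).trans (add_le_add_left (le_csSup hψ ⟨x, hx, rfl⟩) c)

lemma csInf_image_sub_le_csInf_image (hs : s.Nonempty) (hψ : BddBelow (ψ '' s))
    (h : ∀ x ∈ s, ψ x - c ≤ φ x) : sInf (ψ '' s) - c ≤ sInf (φ '' s) :=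
  le_csInf (hs.image _) <| by
    rintro _ ⟨x, hx, rfl⟩
    exact (sub_le_sub_right (csInf_le hψ ⟨x, hx, rfl⟩) c).trans (h x hx)

end ImageBounds

theorem statement_14_general {d1 d2 : ℕ} {Z : Type*}
    (n m : ℕ)
    (f : Euc d1 → Euc d2 → Z → ℝ) (S : Fin n → Z) (U : Finset (Fin n)) (hUcard : U.card = m)
    (F : Euc d1 → Euc d2 → ℝ) (L μ σ₁ σ₂ : ℝ)
    (hL : 0 ≤ L) (hμ : 0 < μ) (hσ₁ : 0 < σ₁) (hσ₂ : 0 < σ₂)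
    (hFLip : ∀ (ω ω' : Euc d1) (v v' : Euc d2),
      (F ω v - F ω' v') ^ 2 ≤ L ^ 2 * (‖ω - ω'‖ ^ 2 + ‖v - v'‖ ^ 2))
    (hLip : ∀ (z : Z) (ω ω' : Euc d1) (v v' : Euc d2),
      (f ω v z - f ω' v' z) ^ 2 ≤ L ^ 2 * (‖ω - ω'‖ ^ 2 + ‖v - v'‖ ^ 2))
    (W : Set (Euc d1)) (V : Set (Euc d2))
    (hWne : W.Nonempty) (hWcp : IsCompact W)
    (hVne : V.Nonempty) (hVcp : IsCompact V)
    (ωS : Euc d1) (νS : Euc d2)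
    (FS : Euc d1 → Euc d2 → ℝ)
    (hDwwLow : ∀ x : Euc d1, μ * ‖x‖ ≤ ‖Dww FS ωS νS x‖)
    (hDvvLow : ∀ y : Euc d2, μ * ‖y‖ ≤ ‖Dvv FS ωS νS y‖)
    (ωtil : Euc d1)
    (hωtil : ωtil = ωS + (1 / (n : ℝ)) •
      (Dww FS ωS νS).inverse (∑ i ∈ U, gradW (fz f (S i)) ωS νS))
    (νtil : Euc d2)
    (hνtil : νtil = νS + (1 / (n : ℝ)) •
      (Dvv FS ωS νS).inverse (∑ i ∈ U, gradV (fz f (S i)) ωS νS)) :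
    sSup ((fun v => ∫ ξ, F (ωtil + ξ) v ∂(stdGaussian d1 σ₁)) '' V)
        - sInf ((fun ω => ∫ ξ, F ω (νtil + ξ) ∂(stdGaussian d2 σ₂)) '' W)
      ≤ 2 * m * L ^ 2 / (μ * n) + (Real.sqrt d1 * σ₁ + Real.sqrt d2 * σ₂) * L
        + (sSup ((fun v => F ωS v) '' V) - sInf ((fun ω => F ω νS) '' W)) := by
  have hω : ‖ωtil - ωS‖ ≤ m * L / (μ * n) := by
    rw [hωtil, add_sub_cancel_left, ← hUcard]
    exact norm_smul_inverse_sum_le hμ hDwwLow U (fun i _ => norm_gradient_le_of_lipschitzWith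
      (lipschitzWith_left_of_sq_le hL (hLip (S i)) νS) ωS |>.trans_eq (Real.coe_toNNReal L hL)) n
  have hν : ‖νtil - νS‖ ≤ m * L / (μ * n) := by
    rw [hνtil, add_sub_cancel_left, ← hUcard]
    exact norm_smul_inverse_sum_le hμ hDvvLow U (fun i _ => norm_gradient_le_of_lipschitzWith
      (lipschitzWith_right_of_sq_le hL (hLip (S i)) ωS) νS |>.trans_eq (Real.coe_toNNReal L hL)) n
  have hsup : sSup ((fun v => ∫ ξ, F (ωtil + ξ) v ∂(stdGaussian d1 σ₁)) '' V)
      ≤ sSup ((fun v => F ωS v) '' V) + L * (m * L / (μ * n) + √d1 * σ₁) := by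
    refine csSup_image_le_csSup_image_add hVne
      (hVcp.bddAbove_image (lipschitzWith_right_of_sq_le hL hFLip ωS).continuous.continuousOn)
      fun v _ => ?_
    have := abs_integral_stdGaussian_comp_add_sub_le hσ₁.le hL
      (lipschitzWith_left_of_sq_le hL hFLip v) hω
    linarith [(abs_le.1 this).2]
  have hinf : sInf ((fun ω => F ω νS) '' W) - L * (m * L / (μ * n) + √d2 * σ₂)
      ≤ sInf ((fun ω => ∫ ξ, F ω (νtil + ξ) ∂(stdGaussian d2 σ₂)) '' W) := by
    refine csInf_image_sub_le_csInf_image hWne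
      (hWcp.bddBelow_image (lipschitzWith_left_of_sq_le hL hFLip νS).continuous.continuousOn)
      fun ω _ => ?_
    have := abs_integral_stdGaussian_comp_add_sub_le hσ₂.le hL
      (lipschitzWith_right_of_sq_le hL hFLip ω) hν
    linarith [(abs_le.1 this).1]
  linarith [show L * (m * L / (μ * n) + √d1 * σ₁) + L * (m * L / (μ * n) + √d2 * σ₂) =
    2 * m * L ^ 2 / (μ * n) + (√d1 * σ₁ + √d2 * σ₂) * L by ring]

/-- Population weak primal-dual risk of the noisy efficient unlearning
variables: `max_{v∈V} ∫ F(ω̃+ξ₁,v) dγ₁ − min_{ω∈W} ∫ F(ω,ṽ+ξ₂) dγ₂` is at most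
`2mL²/(μn) + (√d₁σ₁ + √d₂σ₂)L` plus the primal-dual gap of `F` at `(ω*_S, ν*_S)`. -/
theorem statement_14 {d1 d2 : ℕ} {Z : Type*}
    (n m : ℕ) (hm : 1 ≤ m) (hmn : m < n)
    (f : Euc d1 → Euc d2 → Z → ℝ) (S : Fin n → Z) (U : Finset (Fin n)) (hUcard : U.card = m)
    (F : Euc d1 → Euc d2 → ℝ) (L μ σ₁ σ₂ : ℝ)
    (hL : 0 ≤ L) (hμ : 0 < μ) (hσ₁ : 0 < σ₁) (hσ₂ : 0 < σ₂)
    (hFLip : ∀ (ω ω' : Euc d1) (v v' : Euc d2),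
      (F ω v - F ω' v') ^ 2 ≤ L ^ 2 * (‖ω - ω'‖ ^ 2 + ‖v - v'‖ ^ 2))
    (hdiff : ∀ z : Z, Differentiable ℝ fun p : Euc d1 × Euc d2 => f p.1 p.2 z)
    (hLip : ∀ (z : Z) (ω ω' : Euc d1) (v v' : Euc d2),
      (f ω v z - f ω' v' z) ^ 2 ≤ L ^ 2 * (‖ω - ω'‖ ^ 2 + ‖v - v'‖ ^ 2))
    (W : Set (Euc d1)) (V : Set (Euc d2))
    (hWne : W.Nonempty) (hWcp : IsCompact W)
    (hVne : V.Nonempty) (hVcp : IsCompact V)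
    (ωS : Euc d1) (νS : Euc d2) (hωS : ωS ∈ W) (hνS : νS ∈ V)
    (FS : Euc d1 → Euc d2 → ℝ)
    (hFS : FS = fun ω v => (1 / (n : ℝ)) * ∑ i, f ω v (S i))
    (hDwwLow : ∀ x : Euc d1, μ * ‖x‖ ≤ ‖Dww FS ωS νS x‖)
    (hDvvLow : ∀ y : Euc d2, μ * ‖y‖ ≤ ‖Dvv FS ωS νS y‖)
    (ωtil : Euc d1)
    (hωtil : ωtil = ωS + (1 / (n : ℝ)) •
      (Dww FS ωS νS).inverse (∑ i ∈ U, gradW (fz f (S i)) ωS νS))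
    (νtil : Euc d2)
    (hνtil : νtil = νS + (1 / (n : ℝ)) •
      (Dvv FS ωS νS).inverse (∑ i ∈ U, gradV (fz f (S i)) ωS νS)) :
    sSup ((fun v => ∫ ξ, F (ωtil + ξ) v ∂(stdGaussian d1 σ₁)) '' V)
        - sInf ((fun ω => ∫ ξ, F ω (νtil + ξ) ∂(stdGaussian d2 σ₂)) '' W)
      ≤ 2 * m * L ^ 2 / (μ * n) + (Real.sqrt d1 * σ₁ + Real.sqrt d2 * σ₂) * L
        + (sSup ((fun v => F ωS v) '' V) - sInf ((fun ω => F ω νS) '' W)) :=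
  statement_14_general n m f S U hUcard F L μ σ₁ σ₂ hL hμ hσ₁ hσ₂ hFLip hLip W V hWne hWcp hVne hVcp
    ωS νS FS hDwwLow hDvvLow ωtil hωtil νtil hνtil

end
end
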